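/- arXiv:1906.02271 — 9 statements merged into one kernel-verified Lean document; each statement's English description precedes it below -/
import Mathlib

section
/- Let η: ℝ → ℝ be a differentiable function with η'(θ) > 0 for all θ, satisfying the Riccati equation η' = −(λ/2)η² + aη + b for constants λ, a, b ∈ ℝ with λ ≠ 0 and discriminant a² + 2bλ > 0, and suppose η is bounded. Let α < β be the two real roots of −(λ/2)x² + ax + b. Then the image of η is contained in the open interval (α, β). -/
/-!
Since α ≠ β, the right-hand side factors as `-(λ/2) (η - α) (η - β)`, and it is positive.
If `λ ≤ 0`, then `η 0` lies outside `[α, β]`, say above `β`. The quadratic is increasing there and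
`η` is increasing, so `η' θ ≥ η' 0 > 0` for `θ ≥ 0` and `η` grows at least linearly, contradicting
boundedness (symmetrically below `α` as `θ → -∞`). Hence `λ > 0`, and then the positivity of
`-(λ/2) (η - α) (η - β)` forces `α < η < β`.
-/

open Filter Set

theorem quadratic_eq_mul_sub_mul_sub {K : Type*} [CommRing K] [IsDomain K] {c a b α β : K}
    (hα : c * α ^ 2 + a * α + b = 0) (hβ : c * β ^ 2 + a * β + b = 0) (hαβ : α ≠ β) (x : K) :
    c * x ^ 2 + a * x + b = c * ((x - α) * (x - β)) := by
  have hvieta : a + c * (α + β) = 0 := by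
    refine (mul_eq_zero.1 ?_).resolve_left (sub_ne_zero.2 hαβ.symm)
    linear_combination hβ - hα
  linear_combination hα + (x - α) * hvieta

theorem monotoneOn_mul_sub_mul_sub {k : ℝ} (hk : 0 ≤ k) (α β : ℝ) :
    MonotoneOn (fun x => k * ((x - α) * (x - β))) (Ici ((α + β) / 2)) := by
  intro x hx y _ hxy
  simp only [mem_Ici] at hx
  nlinarith [mul_nonneg (mul_nonneg hk (sub_nonneg.2 hxy)) (by linarith : 0 ≤ x + y - α - β)]

theorem antitoneOn_mul_sub_mul_sub {k : ℝ} (hk : 0 ≤ k) (α β : ℝ) :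
    AntitoneOn (fun x => k * ((x - α) * (x - β))) (Iic ((α + β) / 2)) := by
  intro x _ y hy hxy
  simp only [mem_Iic] at hy
  nlinarith [mul_nonneg (mul_nonneg hk (sub_nonneg.2 hxy)) (by linarith : 0 ≤ α + β - x - y)]

theorem tendsto_atTop_of_le_deriv_Ici {f : ℝ → ℝ} (hf : Differentiable ℝ f) {c x₀ : ℝ}
    (hc : 0 < c) (hderiv : ∀ x ≥ x₀, c ≤ deriv f x) : Tendsto f atTop atTop := by
  have hlin : ∀ x ≥ x₀, c * (x - x₀) ≤ f x - f x₀ := fun x hx =>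
    (convex_Ici x₀).mul_sub_le_image_sub_of_le_deriv hf.continuous.continuousOn
      hf.differentiableOn (fun y hy => hderiv y (interior_subset hy)) x₀ self_mem_Ici x hx hx
  refine tendsto_atTop_mono' _ ((eventually_ge_atTop x₀).mono fun x hx => ?_)
    (tendsto_atTop_add_const_right _ (f x₀)
      ((tendsto_atTop_add_const_right _ (-x₀) tendsto_id).const_mul_atTop hc))
  have := hlin x hx
  simp only [id]
  linarith

theorem tendsto_atBot_of_le_deriv_Iic {f : ℝ → ℝ} (hf : Differentiable ℝ f) {c x₀ : ℝ}
    (hc : 0 < c) (hderiv : ∀ x ≤ x₀, c ≤ deriv f x) : Tendsto f atBot atBot := by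
  have hlin : ∀ x ≤ x₀, c * (x₀ - x) ≤ f x₀ - f x := fun x hx =>
    (convex_Iic x₀).mul_sub_le_image_sub_of_le_deriv hf.continuous.continuousOn
      hf.differentiableOn (fun y hy => hderiv y (interior_subset hy : y ∈ Iic x₀)) x hx x₀
      self_mem_Iic hx
  refine tendsto_atBot_mono' _ ((eventually_le_atBot x₀).mono fun x hx => ?_)
    (tendsto_atBot_add_const_right _ (f x₀)
      ((tendsto_atBot_add_const_right _ (-x₀) tendsto_id).const_mul_atBot hc))
  have := hlin x hx
  simp only [id]
  linarith

theorem tendsto_atTop_of_deriv_eq_comp {f g : ℝ → ℝ} (hf : Differentiable ℝ f) (hmono : Monotone f)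
    (hode : ∀ x, deriv f x = g (f x)) {x₀ : ℝ} (hg : MonotoneOn g (Ici (f x₀)))
    (hpos : 0 < g (f x₀)) : Tendsto f atTop atTop :=
  tendsto_atTop_of_le_deriv_Ici hf hpos fun x hx =>
    hode x ▸ hg self_mem_Ici (mem_Ici.2 (hmono hx)) (hmono hx)

theorem tendsto_atBot_of_deriv_eq_comp {f g : ℝ → ℝ} (hf : Differentiable ℝ f) (hmono : Monotone f)
    (hode : ∀ x, deriv f x = g (f x)) {x₀ : ℝ} (hg : AntitoneOn g (Iic (f x₀)))
    (hpos : 0 < g (f x₀)) : Tendsto f atBot atBot :=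
  tendsto_atBot_of_le_deriv_Iic hf hpos fun x hx =>
    hode x ▸ hg (mem_Iic.2 (hmono hx)) self_mem_Iic (hmono hx)

theorem not_isBounded_range_of_deriv_eq_mul_sub_mul_sub {f : ℝ → ℝ} (hf : Differentiable ℝ f)
    (hpos : ∀ x, 0 < deriv f x) {k α β : ℝ} (hk : 0 ≤ k)
    (hode : ∀ x, deriv f x = k * ((f x - α) * (f x - β))) : ¬ Bornology.IsBounded (range f) := by
  rw [isBounded_iff_bddBelow_bddAbove]
  rintro ⟨hbelow, habove⟩
  have hmono := (strictMono_of_deriv_pos hpos).monotone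
  have hprod : 0 < (f 0 - α) * (f 0 - β) := pos_of_mul_pos_right (hode 0 ▸ hpos 0) hk
  rcases pos_and_pos_or_neg_and_neg_of_mul_pos hprod with ⟨hgtα, hgtβ⟩ | ⟨hltα, hltβ⟩
  · refine not_bddAbove_of_tendsto_atTop (tendsto_atTop_of_deriv_eq_comp hf hmono hode
      ((monotoneOn_mul_sub_mul_sub hk α β).mono (Ici_subset_Ici.2 ?_)) (hode 0 ▸ hpos 0)) habove
    linarith
  · refine not_bddBelow_of_tendsto_atBot (tendsto_atBot_of_deriv_eq_comp hf hmono hode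
      ((antitoneOn_mul_sub_mul_sub hk α β).mono (Iic_subset_Iic.2 ?_)) (hode 0 ▸ hpos 0)) hbelow
    linarith

theorem riccati_image_in_roots_general (η : ℝ → ℝ) (lam a b α β : ℝ)
    (hdiff : Differentiable ℝ η)
    (hpos : ∀ θ, 0 < deriv η θ)
    (hode : ∀ θ, deriv η θ = -(lam / 2) * η θ ^ 2 + a * η θ + b)
    (hbdd : ∃ M, ∀ θ, |η θ| ≤ M)
    (hα : -(lam / 2) * α ^ 2 + a * α + b = 0)
    (hβ : -(lam / 2) * β ^ 2 + a * β + b = 0)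
    (hαβ : α < β) :
    ∀ θ : ℝ, α < η θ ∧ η θ < β := by
  have hfactor : ∀ θ, deriv η θ = -(lam / 2) * ((η θ - α) * (η θ - β)) := fun θ =>
    (hode θ).trans (quadratic_eq_mul_sub_mul_sub hα hβ hαβ.ne _)
  have hlam : 0 < lam := by
    by_contra! hlam
    obtain ⟨M, hM⟩ := hbdd
    exact not_isBounded_range_of_deriv_eq_mul_sub_mul_sub hdiff hpos (by linarith) hfactor
      (isBounded_iff_forall_norm_le.2 ⟨M, forall_mem_range.2 hM⟩)
  intro θ
  have hneg : (η θ - α) * (η θ - β) < 0 :=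
    neg_of_mul_pos_right (hfactor θ ▸ hpos θ) (by linarith)
  rcases mul_neg_iff.1 hneg with ⟨hgt, hlt⟩ | ⟨hlt, hgt⟩
  · exact ⟨by linarith, by linarith⟩
  · linarith

theorem riccati_image_in_roots (η : ℝ → ℝ) (lam a b α β : ℝ)
    (hdiff : Differentiable ℝ η)
    (hpos : ∀ θ, 0 < deriv η θ)
    (hode : ∀ θ, deriv η θ = -(lam / 2) * η θ ^ 2 + a * η θ + b)
    (hlam : lam ≠ 0) (hdisc : 0 < a ^ 2 + 2 * b * lam)
    (hbdd : ∃ M, ∀ θ, |η θ| ≤ M)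
    (hα : -(lam / 2) * α ^ 2 + a * α + b = 0)
    (hβ : -(lam / 2) * β ^ 2 + a * β + b = 0)
    (hαβ : α < β) :
    ∀ θ : ℝ, α < η θ ∧ η θ < β :=
  riccati_image_in_roots_general η lam a b α β hdiff hpos hode hbdd hα hβ hαβ
end

section
/- Let η: ℝ → ℝ be differentiable with η'(θ) > 0 for all θ. Then there do not exist λ ≠ 0 and α ∈ ℝ such that η'(θ) = −(λ/2)(η(θ)+α)² for all θ ∈ ℝ. -/
/-!
The derivative of `η` is positive, so `η + α` never vanishes, and the Riccati equation says
exactly that `1 / (η + α)` has constant derivative `λ / 2 ≠ 0`. An affine function with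
nonzero slope has a zero, but a reciprocal does not.
-/

theorem eq_add_mul_of_hasDerivAt_const {𝕜 : Type*} [RCLike 𝕜] {f : 𝕜 → 𝕜} {c : 𝕜}
    (hf : ∀ x, HasDerivAt f c x) (x : 𝕜) : f x = f 0 + c * x := by
  have hconst : ∀ y, HasDerivAt (fun t => f t - c * t) 0 y := fun y =>
    ((hf y).sub ((hasDerivAt_id y).const_mul c)).congr_deriv (by simp)
  have := is_const_of_deriv_eq_zero (fun y => (hconst y).differentiableAt)
    (fun y => (hconst y).deriv) x 0
  simp only [mul_zero, sub_zero] at this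
  rw [← this]
  ring

theorem exists_eq_zero_of_hasDerivAt_const {𝕜 : Type*} [RCLike 𝕜] {f : 𝕜 → 𝕜} {c : 𝕜}
    (hc : c ≠ 0) (hf : ∀ x, HasDerivAt f c x) : ∃ x, f x = 0 :=
  ⟨-f 0 / c, by rw [eq_add_mul_of_hasDerivAt_const hf]; field_simp; ring⟩

theorem HasDerivAt.inv_of_eq_neg_mul_sq {𝕜 : Type*} [NontriviallyNormedField 𝕜] {f : 𝕜 → 𝕜}
    {k x : 𝕜} (hf : HasDerivAt f (-k * f x ^ 2) x) (hx : f x ≠ 0) :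
    HasDerivAt (fun t => (f t)⁻¹) k x :=
  (hf.inv hx).congr_deriv (by field_simp)

theorem no_double_root_riccati_general (η : ℝ → ℝ)
    (hpos : ∀ θ, 0 < deriv η θ) :
    ¬∃ (lam α : ℝ), lam ≠ 0 ∧ ∀ θ, deriv η θ = -(lam / 2) * (η θ + α) ^ 2 := by
  rintro ⟨lam, α, hlam, heq⟩
  have hne : ∀ θ, η θ + α ≠ 0 := fun θ h => by simpa [heq θ, h] using hpos θ
  have hderiv : ∀ θ, HasDerivAt (fun t => η t + α) (-(lam / 2) * (η θ + α) ^ 2) θ :=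
    fun θ => heq θ ▸ (differentiableAt_of_deriv_ne_zero (hpos θ).ne').hasDerivAt.add_const α
  obtain ⟨θ, hθ⟩ := exists_eq_zero_of_hasDerivAt_const (div_ne_zero hlam two_ne_zero)
    fun θ => (hderiv θ).inv_of_eq_neg_mul_sq (hne θ)
  exact hne θ (inv_eq_zero.mp hθ)

theorem no_double_root_riccati (η : ℝ → ℝ)
    (hdiff : Differentiable ℝ η)
    (hpos : ∀ θ, 0 < deriv η θ) :
    ¬∃ (lam α : ℝ), lam ≠ 0 ∧ ∀ θ, deriv η θ = -(lam / 2) * (η θ + α) ^ 2 :=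
  no_double_root_riccati_general η hpos
end

section
/- Let η: ℝ → ℝ be differentiable and bounded with η'(θ) > 0 for all θ. Then there do not exist constants λ, a, b ∈ ℝ with η' = −(λ/2)η² + aη + b and discriminant a² + 2bλ < 0. -/
/-!
Completing the square, `4c · (c x² + a x + b) = (2c x + a)² - Δ ≥ -Δ`. For the Riccati equation
`η' = c η² + a η + b` with `c = -λ/2` and `Δ = a² + 2bλ < 0` this makes `4c · η` grow at least at the
constant rate `-Δ > 0`, so `η` cannot be bounded.
-/

open Filter

theorem neg_discrim_le_four_mul_mul_quadratic {R : Type*} [CommRing R] [LinearOrder R]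
    [IsStrictOrderedRing R] (a b c x : R) : -discrim a b c ≤ 4 * a * (a * x ^ 2 + b * x + c) := by
  have hsquare : 4 * a * (a * x ^ 2 + b * x + c) = (2 * a * x + b) ^ 2 - discrim a b c := by
    rw [discrim]; ring
  rw [hsquare]
  linarith [sq_nonneg (2 * a * x + b)]

theorem tendsto_atTop_of_pos_le_deriv {f : ℝ → ℝ} {δ : ℝ} (hδ : 0 < δ)
    (hf : ∀ x, δ ≤ deriv f x) : Tendsto f atTop atTop := by
  -- `deriv f x = 0` wherever `f` is not differentiable, so the lower bound forces differentiability.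
  have hdiff : Differentiable ℝ f := fun x =>
    differentiableAt_of_deriv_ne_zero (hδ.trans_le (hf x)).ne'
  have hlinear : ∀ᶠ x in atTop, f 0 + δ * x ≤ f x := by
    filter_upwards [eventually_ge_atTop 0] with x hx
    have := mul_sub_le_image_sub_of_le_deriv hdiff hf (x := 0) (y := x) hx
    simp only [sub_zero] at this
    linarith
  exact tendsto_atTop_mono' atTop hlinear
    (tendsto_atTop_add_const_left _ _ (tendsto_id.const_mul_atTop hδ))

theorem no_negative_discriminant_riccati_general (η : ℝ → ℝ)
    (hbdd : ∃ M, ∀ θ, |η θ| ≤ M) :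
    ¬∃ (lam a b : ℝ),
      (∀ θ, deriv η θ = -(lam / 2) * η θ ^ 2 + a * η θ + b) ∧
        a ^ 2 + 2 * b * lam < 0 := by
  rintro ⟨lam, a, b, hriccati, hdisc⟩
  obtain ⟨M, hM⟩ := hbdd
  set k := 4 * -(lam / 2)
  have hdiscrim : discrim (-(lam / 2)) a b = a ^ 2 + 2 * b * lam := by rw [discrim]; ring
  have hgrowth : ∀ θ, -(a ^ 2 + 2 * b * lam) ≤ deriv (fun θ => k * η θ) θ := fun θ => by
    rw [deriv_const_mul_field, hriccati θ, ← hdiscrim]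
    exact neg_discrim_le_four_mul_mul_quadratic _ _ _ _
  have hbounded : BddAbove (Set.range fun θ => k * η θ) := by
    refine ⟨|k| * M, ?_⟩
    rintro _ ⟨θ, rfl⟩
    calc k * η θ ≤ |k * η θ| := le_abs_self _
      _ = |k| * |η θ| := abs_mul _ _
      _ ≤ |k| * M := mul_le_mul_of_nonneg_left (hM θ) (abs_nonneg k)
  exact not_bddAbove_of_tendsto_atTop (tendsto_atTop_of_pos_le_deriv (by linarith) hgrowth) hbounded

theorem no_negative_discriminant_riccati (η : ℝ → ℝ)
    (hdiff : Differentiable ℝ η)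
    (hbdd : ∃ M, ∀ θ, |η θ| ≤ M)
    (hpos : ∀ θ, 0 < deriv η θ) :
    ¬∃ (lam a b : ℝ),
      (∀ θ, deriv η θ = -(lam / 2) * η θ ^ 2 + a * η θ + b) ∧
        a ^ 2 + 2 * b * lam < 0 :=
  no_negative_discriminant_riccati_general η hbdd
end

section
/- Let α be a real number that is not a natural number, and let f: ℝ → ℝ be f(x) = (1+e^x)^α. Then for every natural number k, the functions f, f', f'', ..., f^{(k)} span a subspace of C^∞(ℝ) of dimension at least k+1; equivalently, f, f', ..., f^{(k)} are linearly independent. -/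
/-!
Write `f x = (1 + exp x) ^ α` and `t = sigmoid x = exp x / (1 + exp x)`. Then `dt/dx = t (1 - t)`
and `f' = α t f`, so `f⁽ʲ⁾ = Pⱼ(t) f` for the polynomials `P₀ = 1`,
`Pⱼ₊₁ = X (1 - X) Pⱼ' + α X Pⱼ`. The leading coefficient of `Pⱼ` is `α (α - 1) ⋯ (α - j + 1)`,
which is nonzero when `α ∉ ℕ`, so `deg Pⱼ = j` and the `Pⱼ` are linearly independent. Finally
`P ↦ P(sigmoid) f` is injective, because `f > 0` and `sigmoid` takes infinitely many values.
-/

open Real Polynomial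

noncomputable def twistedDerivative (α : ℝ) (P : ℝ[X]) : ℝ[X] :=
  X * ((1 - X) * derivative P + C α * P)

section Coefficients

variable (α : ℝ) (P : ℝ[X])

lemma coeff_twistedDerivative_zero : (twistedDerivative α P).coeff 0 = 0 := by
  simp [twistedDerivative]

lemma coeff_twistedDerivative_succ (n : ℕ) :
    (twistedDerivative α P).coeff (n + 1) = (n + 1) * P.coeff (n + 1) + (α - n) * P.coeff n := by
  rcases n with _ | n
  · simp [twistedDerivative, coeff_derivative, sub_mul]
  · simp [twistedDerivative, coeff_X_mul, coeff_derivative, sub_mul, coeff_C_mul]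
    ring

end Coefficients

lemma degree_twistedDerivative {α : ℝ} {P : ℝ[X]} {n : ℕ} (hP : P.degree = n) (hα : α ≠ n) :
    (twistedDerivative α P).degree = ↑(n + 1) := by
  have hle : P.natDegree ≤ n := natDegree_le_of_degree_le hP.le
  refine degree_eq_of_le_of_coeff_ne_zero ?_ ?_
  · refine degree_le_iff_coeff_zero _ _ |>.mpr fun m hm => ?_
    have hm : n + 1 < m := by exact_mod_cast hm
    obtain ⟨m, rfl⟩ : ∃ m', m = m' + 1 := ⟨m - 1, by omega⟩
    rw [coeff_twistedDerivative_succ, coeff_eq_zero_of_natDegree_lt (by omega),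
      coeff_eq_zero_of_natDegree_lt (by omega)]
    ring
  · rw [coeff_twistedDerivative_succ, coeff_eq_zero_of_natDegree_lt (by omega), mul_zero,
      zero_add]
    exact mul_ne_zero (sub_ne_zero.mpr hα) (coeff_ne_zero_of_eq_degree hP)

lemma degree_twistedDerivative_iterate {α : ℝ} (hα : ∀ n : ℕ, α ≠ n) (j : ℕ) :
    ((twistedDerivative α)^[j] 1).degree = j := by
  induction j with
  | zero => simp
  | succ j ih => rw [Function.iterate_succ_apply']; exact degree_twistedDerivative ih (hα j)

noncomputable def twistedDerivativeSequence {α : ℝ} (hα : ∀ n : ℕ, α ≠ n) : Sequence ℝ :=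
  ⟨fun j => (twistedDerivative α)^[j] 1, degree_twistedDerivative_iterate hα⟩

lemma sigmoid_mul_one_add_exp (x : ℝ) : sigmoid x * (1 + exp x) = exp x := by
  rw [sigmoid_def, exp_neg]
  field_simp
  ring

lemma hasDerivAt_one_add_exp_rpow (α x : ℝ) :
    HasDerivAt (fun x => (1 + exp x) ^ α) (α * sigmoid x * (1 + exp x) ^ α) x := by
  have hpos : 0 < 1 + exp x := by positivity
  convert ((hasDerivAt_exp x).const_add 1).rpow_const (p := α) (Or.inl hpos.ne') using 1
  rw [rpow_sub_one hpos.ne']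
  field_simp
  rw [mul_assoc, sigmoid_mul_one_add_exp]

lemma hasDerivAt_eval_sigmoid_mul_one_add_exp_rpow (α : ℝ) (P : ℝ[X]) (x : ℝ) :
    HasDerivAt (fun x => P.eval (sigmoid x) * (1 + exp x) ^ α)
      ((twistedDerivative α P).eval (sigmoid x) * (1 + exp x) ^ α) x := by
  refine (((P.hasDerivAt _).comp x (hasDerivAt_sigmoid x)).fun_mul
    (hasDerivAt_one_add_exp_rpow α x)).congr_deriv ?_
  simp only [twistedDerivative, eval_mul, eval_X, eval_add, eval_sub, eval_one, eval_C,
    Function.comp_apply]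
  ring

lemma iteratedDeriv_one_add_exp_rpow (α : ℝ) (j : ℕ) :
    iteratedDeriv j (fun x => (1 + exp x) ^ α) =
      fun x => ((twistedDerivative α)^[j] 1).eval (sigmoid x) * (1 + exp x) ^ α := by
  induction j with
  | zero => simp
  | succ j ih =>
    ext x
    rw [iteratedDeriv_succ, ih, Function.iterate_succ_apply',
      (hasDerivAt_eval_sigmoid_mul_one_add_exp_rpow α _ x).deriv]

lemma ker_pi_smul_leval_eq_bot {R ι : Type*} [CommRing R] [IsDomain R] [Infinite ι]
    {s w : ι → R} (hs : Function.Injective s) (hw : ∀ i, w i ≠ 0) :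
    LinearMap.ker (LinearMap.pi fun i => w i • leval (s i)) = ⊥ := by
  refine LinearMap.ker_eq_bot'.mpr fun P hP => eq_zero_of_infinite_isRoot P ?_
  refine (Set.infinite_range_of_injective hs).mono ?_
  rintro _ ⟨i, rfl⟩
  have hPi := congrFun hP i
  simp only [LinearMap.pi_apply, LinearMap.smul_apply, leval_apply, smul_eq_mul,
    Pi.zero_apply] at hPi
  exact (mul_eq_zero.mp hPi).resolve_left (hw i)

theorem derivatives_linearIndependent (α : ℝ) (hα : ¬∃ n : ℕ, α = n) (k : ℕ) :
    LinearIndependent ℝ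
      (fun j : Fin (k + 1) =>
        iteratedDeriv j (fun x : ℝ => (1 + Real.exp x) ^ α)) := by
  have hα' : ∀ n : ℕ, α ≠ n := fun n h => hα ⟨n, h⟩
  let Φ : ℝ[X] →ₗ[ℝ] ℝ → ℝ := LinearMap.pi fun x => (1 + exp x) ^ α • leval (sigmoid x)
  have hΦ : LinearMap.ker Φ = ⊥ :=
    ker_pi_smul_leval_eq_bot sigmoid_injective fun x => (rpow_pos_of_pos (by positivity) α).ne'
  have hfamily : (fun j : Fin (k + 1) => iteratedDeriv j (fun x : ℝ => (1 + exp x) ^ α)) =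
      Φ ∘ twistedDerivativeSequence hα' ∘ Fin.val := by
    ext j x
    simp [Φ, iteratedDeriv_one_add_exp_rpow, twistedDerivativeSequence, mul_comm]
  rw [hfamily]
  exact ((twistedDerivativeSequence hα').linearIndependent.comp _ Fin.val_injective).map' Φ hΦ
end

section
/- Let α ∉ ℕ be a real number and k ∈ ℕ. Then the functions φ_l: ℝ → ℝ, φ_l(x) = (1+e^x)^{α−l} e^{lx}, for l = 0, 1, ..., k, are linearly independent over ℝ. -/
open Real

/-!
Writing `t = sigmoid x = eˣ / (1 + eˣ)`, one has `φ_l(x) = (1 + eˣ)^α · tˡ`. The common factor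
never vanishes and `t` takes infinitely many values, so a linear relation among the `φ_l` gives a
polynomial with infinitely many roots.
-/

open Polynomial Set in
theorem linearIndependent_pow_comp_of_infinite_range {R X : Type*} [CommRing R] [IsDomain R]
    {u : X → R} (hu : (range u).Infinite) :
    LinearIndependent R fun l : ℕ => fun x => u x ^ l := by
  have hker : LinearMap.ker (LinearMap.pi fun x => leval (u x)) = ⊥ := by
    refine LinearMap.ker_eq_bot'.2 fun p hp => eq_zero_of_infinite_isRoot p (hu.mono ?_)
    rintro _ ⟨x, rfl⟩
    exact congrFun hp x
  have heval (l : ℕ) : (LinearMap.pi fun x => leval (u x)) (monomial l 1) = fun x => u x ^ l := by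
    ext x
    simp
  simpa [Function.comp_def, heval] using (basisMonomials R).linearIndependent.map' _ hker

theorem LinearIndependent.mul_left_of_forall_ne_zero {ι R X : Type*} [CommRing R] [IsDomain R]
    {v : ι → X → R} (hv : LinearIndependent R v) {w : X → R} (hw : ∀ x, w x ≠ 0) :
    LinearIndependent R fun i => w * v i :=
  hv.map' (LinearMap.mulLeft R w) <| LinearMap.ker_eq_bot'.2 fun _ hf =>
    funext fun x => (mul_eq_zero.1 (congrFun hf x)).resolve_left (hw x)

theorem Real.sigmoid_eq_exp_div (x : ℝ) : sigmoid x = exp x / (1 + exp x) := by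
  rw [sigmoid_def, exp_neg]
  field_simp
  ring

theorem one_add_exp_rpow_sub_mul_exp (α x : ℝ) (l : ℕ) :
    (1 + exp x) ^ (α - l) * exp (l * x) = (1 + exp x) ^ α * sigmoid x ^ l := by
  rw [rpow_sub (by positivity), rpow_natCast, exp_nat_mul, sigmoid_eq_exp_div, div_pow]
  ring

theorem phi_linearIndependent_general (α : ℝ) (k : ℕ) :
    LinearIndependent ℝ
      (fun l : Fin (k + 1) =>
        fun x : ℝ => (1 + Real.exp x) ^ (α - (l : ℕ)) * Real.exp ((l : ℕ) * x)) := by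
  simp_rw [one_add_exp_rpow_sub_mul_exp]
  have hsigmoid := linearIndependent_pow_comp_of_infinite_range
    (Set.infinite_range_of_injective sigmoid_injective)
  exact (hsigmoid.mul_left_of_forall_ne_zero fun x => (rpow_pos_of_pos (by positivity) α).ne').comp
    _ Fin.val_injective

theorem phi_linearIndependent (α : ℝ) (hα : ¬∃ n : ℕ, α = n) (k : ℕ) :
    LinearIndependent ℝ
      (fun l : Fin (k + 1) =>
        fun x : ℝ => (1 + Real.exp x) ^ (α - (l : ℕ)) * Real.exp ((l : ℕ) * x)) :=
  phi_linearIndependent_general α k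
end

section
/- Suppose α > 0 is a real number, m ∈ ℕ, and there exist real numbers ξ_0,...,ξ_m and ω_0,...,ω_m such that (1+e^x)^α = Σ_{k=0}^m e^{ξ_k x + ω_k} for all x ∈ ℝ. Then α is a natural number. -/
/-!
Differentiating `(1 + eˣ)^β = ∑ₖ cₖ e^{ξₖ x}` and dividing by `β eˣ` gives
`(1 + eˣ)^(β-1) = ∑ₖ (cₖ ξₖ / β) e^{(ξₖ-1) x}`. If the `cₖ` are nonnegative, letting `x → -∞`
shows that every exponent carrying a positive coefficient is nonnegative, so the new coefficients
are nonnegative again, and comparing `x = 0` with `x = 1` shows that `β ≥ 0`. Hence the exponent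
can be lowered by one step at a time, and it must reach `0` exactly.
-/

open Real Filter Topology

section ExpSum

variable {ι : Type*} {s : Finset ι} {c ξ : ι → ℝ} {β : ℝ}

theorem hasDerivAt_sum_mul_exp (s : Finset ι) (c ξ : ι → ℝ) (x : ℝ) :
    HasDerivAt (fun y => ∑ k ∈ s, c k * exp (ξ k * y)) (∑ k ∈ s, c k * ξ k * exp (ξ k * x)) x :=
  HasDerivAt.fun_sum fun k _ => by
    simpa [mul_comm, mul_assoc] using (((hasDerivAt_id x).const_mul (ξ k)).exp).const_mul (c k)

theorem hasDerivAt_rpow_one_add_exp (β x : ℝ) :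
    HasDerivAt (fun y => (1 + exp y) ^ β) (β * (1 + exp x) ^ (β - 1) * exp x) x := by
  convert ((hasDerivAt_exp x).const_add 1).rpow_const (p := β) (Or.inl (by positivity)) using 1
  ring

theorem nonneg_exponent_of_rpow_one_add_exp_eq_sum (hc : ∀ k ∈ s, 0 ≤ c k)
    (h : ∀ x, (1 + exp x) ^ β = ∑ k ∈ s, c k * exp (ξ k * x)) {k : ι} (hk : k ∈ s)
    (hck : 0 < c k) : 0 ≤ ξ k := by
  by_contra! hξ
  have hlim : Tendsto (fun x => (1 + exp x) ^ β) atBot (𝓝 1) := by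
    simpa using ((tendsto_exp_atBot.const_add 1).rpow_const (p := β) (Or.inl (by simp)))
  have hterm : Tendsto (fun x => c k * exp (ξ k * x)) atBot atTop :=
    (tendsto_exp_atTop.comp (tendsto_id.const_mul_atBot_of_neg hξ)).const_mul_atTop hck
  have hsum : Tendsto (fun x => ∑ k ∈ s, c k * exp (ξ k * x)) atBot atTop :=
    tendsto_atTop_mono (fun x => Finset.single_le_sum
      (f := fun k => c k * exp (ξ k * x)) (fun j hj => mul_nonneg (hc j hj) (exp_pos _).le) hk)
      hterm
  exact not_tendsto_atTop_of_tendsto_nhds (funext h ▸ hlim) hsum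

theorem nonneg_of_rpow_one_add_exp_eq_sum (hc : ∀ k ∈ s, 0 ≤ c k)
    (h : ∀ x, (1 + exp x) ^ β = ∑ k ∈ s, c k * exp (ξ k * x)) : 0 ≤ β := by
  by_contra! hβ
  have hterm : ∀ k ∈ s, c k * exp (ξ k * 0) ≤ c k * exp (ξ k * 1) := by
    intro k hk
    rcases (hc k hk).eq_or_lt with hck | hck
    · simp [← hck]
    · have := nonneg_exponent_of_rpow_one_add_exp_eq_sum hc h hk hck
      gcongr
      norm_num
  -- The left side is strictly decreasing in `x`, the right side nondecreasing on `x ≥ 0`.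
  have hdecr : (1 + exp 1) ^ β < (1 + exp 0) ^ β :=
    rpow_lt_rpow_of_neg (by positivity) (by gcongr; norm_num) hβ
  rw [h, h] at hdecr
  exact (Finset.sum_le_sum hterm).not_gt hdecr

theorem rpow_one_add_exp_sub_one_eq_sum (hβ : β ≠ 0)
    (h : ∀ x, (1 + exp x) ^ β = ∑ k ∈ s, c k * exp (ξ k * x)) (x : ℝ) :
    (1 + exp x) ^ (β - 1) = ∑ k ∈ s, c k * ξ k / β * exp ((ξ k - 1) * x) := by
  have hderiv : β * (1 + exp x) ^ (β - 1) * exp x = ∑ k ∈ s, c k * ξ k * exp (ξ k * x) :=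
    (funext h ▸ hasDerivAt_rpow_one_add_exp β x).unique (hasDerivAt_sum_mul_exp s c ξ x)
  have hterm : ∀ k ∈ s, c k * ξ k / β * exp ((ξ k - 1) * x)
      = c k * ξ k * exp (ξ k * x) / (β * exp x) := by
    intro k _
    rw [sub_mul, one_mul, exp_sub]
    field_simp
  rw [Finset.sum_congr rfl hterm, ← Finset.sum_div, ← hderiv]
  field_simp

theorem exists_nat_eq_of_rpow_one_add_exp_eq_sum (hc : ∀ k ∈ s, 0 ≤ c k)
    (h : ∀ x, (1 + exp x) ^ β = ∑ k ∈ s, c k * exp (ξ k * x)) : ∃ n : ℕ, β = n := by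
  obtain ⟨n, hn⟩ := exists_nat_gt β
  induction n generalizing β c ξ with
  | zero => exact absurd (nonneg_of_rpow_one_add_exp_eq_sum hc h) (by simpa using hn)
  | succ n ih =>
    rcases (nonneg_of_rpow_one_add_exp_eq_sum hc h).eq_or_lt with hβ | hβ
    · exact ⟨0, by simp [hβ]⟩
    have hc' : ∀ k ∈ s, 0 ≤ c k * ξ k / β := by
      intro k hk
      rcases (hc k hk).eq_or_lt with hck | hck
      · simp [← hck]
      · have := nonneg_exponent_of_rpow_one_add_exp_eq_sum hc h hk hck
        positivity
    obtain ⟨m, hm⟩ := ih hc' (rpow_one_add_exp_sub_one_eq_sum hβ.ne' h)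
      (by push_cast at hn; linarith)
    exact ⟨m + 1, by push_cast; linarith⟩

end ExpSum

theorem rpow_sum_exp_imp_nat_general (α : ℝ) (m : ℕ) (ξ ω : Fin (m + 1) → ℝ)
    (h : ∀ x : ℝ, (1 + Real.exp x) ^ α = ∑ k, Real.exp (ξ k * x + ω k)) :
    ∃ n : ℕ, α = n :=
  exists_nat_eq_of_rpow_one_add_exp_eq_sum (s := Finset.univ) (c := fun k => exp (ω k)) (ξ := ξ)
    (fun k _ => (exp_pos _).le) fun x => by simp only [h x, exp_add, mul_comm]

theorem rpow_sum_exp_imp_nat (α : ℝ) (hα : 0 < α) (m : ℕ) (ξ ω : Fin (m + 1) → ℝ)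
    (h : ∀ x : ℝ, (1 + Real.exp x) ^ α = ∑ k, Real.exp (ξ k * x + ω k)) :
    ∃ n : ℕ, α = n :=
  rpow_sum_exp_imp_nat_general α m ξ ω h
end

section
/- Let n ≥ 1 and define ψ(θ) = n ln(1 + e^θ) for θ ∈ ℝ (the log-partition function of the binomial family B(n)). Let h(θ) = ψ''(θ). Then −h(θ)^{−1} · (d²/dθ²)(ln h(θ)) = 2/n for all θ ∈ ℝ. -/
/-! With `σ t = eᵗ / (1 + eᵗ)` the logistic function, `ψ' = n σ` and `h = ψ'' = n σ'` where
`σ' = eᵗ / (1 + eᵗ)²`. Hence `ln h = ln n + t - 2 ln (1 + eᵗ)`, whose second derivative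
is `-2 σ'`, and the quotient `-(-2 σ') / (n σ')` is `2 / n`. -/

open Real

lemma hasDerivAt_log_one_add_exp (t : ℝ) :
    HasDerivAt (fun s => log (1 + exp s)) (exp t / (1 + exp t)) t :=
  ((hasDerivAt_exp t).const_add 1).log (by positivity)

lemma hasDerivAt_exp_div_one_add_exp (t : ℝ) :
    HasDerivAt (fun s => exp s / (1 + exp s)) (exp t / (1 + exp t) ^ 2) t := by
  have hquot := (hasDerivAt_exp t).div ((hasDerivAt_exp t).const_add 1)
    (by positivity : 1 + exp t ≠ 0)
  exact hquot.congr_deriv (by ring)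

lemma deriv_deriv_log_one_add_exp :
    deriv (deriv fun s => log (1 + exp s)) = fun t => exp t / (1 + exp t) ^ 2 := by
  have hderiv : deriv (fun s => log (1 + exp s)) = fun t => exp t / (1 + exp t) :=
    funext fun t => (hasDerivAt_log_one_add_exp t).deriv
  rw [hderiv]
  exact funext fun t => (hasDerivAt_exp_div_one_add_exp t).deriv

lemma log_const_mul_exp_div_one_add_exp_sq {c : ℝ} (hc : c ≠ 0) (t : ℝ) :
    log (c * (exp t / (1 + exp t) ^ 2)) = log c + (t - 2 * log (1 + exp t)) := by
  rw [log_mul hc (by positivity), log_div (exp_ne_zero t) (by positivity), log_exp, log_pow]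
  push_cast
  ring

lemma deriv_deriv_id_sub_two_mul_log_one_add_exp :
    deriv (deriv fun s => s - 2 * log (1 + exp s)) = fun t => -(2 * (exp t / (1 + exp t) ^ 2)) := by
  have hderiv : deriv (fun s => s - 2 * log (1 + exp s)) = fun t => 1 - 2 * (exp t / (1 + exp t)) :=
    funext fun t => ((hasDerivAt_id t).sub ((hasDerivAt_log_one_add_exp t).const_mul 2)).deriv
  rw [hderiv]
  exact funext fun t => ((hasDerivAt_exp_div_one_add_exp t).const_mul 2).const_sub 1 |>.deriv

theorem binomial_scalar_curvature (n : ℕ) (hn : 1 ≤ n)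
    (ψ : ℝ → ℝ) (hψ : ∀ θ, ψ θ = n * Real.log (1 + Real.exp θ))
    (h : ℝ → ℝ) (hh : ∀ θ, h θ = deriv (deriv ψ) θ) :
    ∀ θ : ℝ, -(h θ)⁻¹ * deriv (deriv (fun t => Real.log (h t))) θ = 2 / n := by
  have hn₀ : (n : ℝ) ≠ 0 := by positivity
  have hh_eq : h = fun t => n * (exp t / (1 + exp t) ^ 2) := by
    funext t
    rw [hh, funext hψ, deriv_const_mul_field', deriv_const_mul_field', deriv_deriv_log_one_add_exp]
  have hlog_h : (fun t => log (h t)) = fun t => log n + (t - 2 * log (1 + exp t)) := by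
    rw [hh_eq]
    exact funext (log_const_mul_exp_div_one_add_exp_sq hn₀)
  intro θ
  rw [hlog_h, deriv_const_add', deriv_deriv_id_sub_two_mul_log_one_add_exp, hh_eq]
  have hσ' : exp θ / (1 + exp θ) ^ 2 ≠ 0 := by positivity
  field_simp
end

section
/- Let m ≥ 1 and let ψ(θ) = ln(Σ_{k=0}^m e^{C_k + θF_k}) with F_0,...,F_m not all equal. Set h = ψ'' and suppose the Hessian scalar curvature S(θ) := −h(θ)^{−1}(ln h)''(θ) is constant equal to λ ∈ ℝ. Then λ ∈ {2/k : k ∈ ℕ, 1 ≤ k ≤ m}. -/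
/-!
Write `v = ψ'` (the Gibbs mean of `F`, which stays between `min F` and `max F`), `h = v' > 0` and
`u = (log h)'`. The curvature equation `S = λ` says `u' = -λ h`, so `c = u + λ v` and
`u² + 2 λ h` are constant. If `λ ≤ 0` then `u` is nondecreasing, `h` is nondecreasing on a
half-line and `v` is unbounded; hence `λ > 0`. With `g² = u² + 2 λ h` the equation
`u' = -(g² - u²) / 2` integrates to `(g - u) / (g + u) = K e^{g θ}`.

Multiplied by the partition function this becomes a vanishing sum of exponentials `e^{ν θ}`.
Their linear independence gives, for the weight `W ν` of the fibre `F = ν`, the recursion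
`(g - c + λ ν) W ν = K (g + c - λ (ν - g)) W (ν - g)`. At `ν = max F + g` and `ν = min F` it
yields `λ (max F - min F) = 2 g`, and in between it forces the values of `F` to descend from
`max F` to `min F` in steps of `g`, so `max F - min F = j g` with `1 ≤ j ≤ m`.
-/

open Real Finset Filter

theorem linearIndependent_exp_mul : LinearIndependent ℝ (fun a θ : ℝ => exp (a * θ)) := by
  let χ : ℝ → Multiplicative ℝ →* ℝ := fun a =>
    { toFun := fun x => exp (a * x.toAdd)
      map_one' := by simp
      map_mul' := fun x y => by simp [mul_add, exp_add] }
  refine (linearIndependent_monoidHom (Multiplicative ℝ) ℝ).comp χ fun a b hab => ?_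
  simpa [χ] using congr($hab (Multiplicative.ofAdd 1))

theorem sum_filter_eq_zero_of_sum_mul_exp_eq_zero {ι : Type*} [Fintype ι] {a c : ι → ℝ}
    (H : ∀ θ, ∑ i, c i * exp (a i * θ) = 0) (ν : ℝ) : ∑ i with a i = ν, c i = 0 := by
  by_cases hν : ν ∈ univ.image a
  · refine linearIndependent_iff'.1 linearIndependent_exp_mul (univ.image a)
      (fun ν => ∑ i with a i = ν, c i) (funext fun θ => ?_) ν hν
    simp only [Finset.sum_apply, Pi.smul_apply, smul_eq_mul, Pi.zero_apply, sum_mul]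
    rw [← H θ, ← sum_fiberwise_of_maps_to (fun i _ => mem_image_of_mem a (mem_univ i))]
    exact sum_congr rfl fun j _ => sum_congr rfl fun i hi => by rw [(mem_filter.1 hi).2]
  · refine sum_eq_zero fun i hi => absurd ?_ hν
    exact (mem_filter.1 hi).2 ▸ mem_image_of_mem a (mem_univ i)

theorem exists_lt_card_sub_mul_eq_of_forall_sub_mem {S : Finset ℝ} {g a x : ℝ} (hg : 0 < g)
    (hx : x ∈ S) (hstep : ∀ ν ∈ S, ν ≠ a → ν - g ∈ S) : ∃ j < #S, x - j * g = a := by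
  by_contra! hne
  have hmem : ∀ i ≤ #S, x - i * g ∈ S := by
    intro i hi
    induction i with
    | zero => simpa using hx
    | succ i ih =>
      convert hstep _ (ih (by omega)) (hne i (by omega)) using 1
      push_cast; ring
  have hinj : Set.InjOn (fun i : ℕ => x - i * g) (range (#S + 1)) := fun i _ j _ hij => by
    have : (i : ℝ) = j := mul_right_cancel₀ hg.ne' (by simpa using hij)
    exact_mod_cast this
  have := card_le_card_of_injOn _ (fun i hi => hmem i (Nat.lt_succ_iff.1 (mem_range.1 hi))) hinj
  simp at this

theorem tendsto_atTop_of_hasDerivAt_of_le {v v' : ℝ → ℝ} (hv : ∀ θ, HasDerivAt v (v' θ) θ)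
    {c : ℝ} (hc : 0 < c) (hle : ∀ θ ∈ Set.Ici 0, c ≤ v' θ) : Tendsto v atTop atTop := by
  have hdiff : Differentiable ℝ v := fun θ => (hv θ).differentiableAt
  have hgrowth := (convex_Ici (0 : ℝ)).mul_sub_le_image_sub_of_le_deriv
    hdiff.continuous.continuousOn hdiff.differentiableOn
    (fun θ hθ => (hv θ).deriv ▸ hle θ (interior_subset hθ)) 0 Set.self_mem_Ici
  refine tendsto_atTop_mono' _ ((eventually_ge_atTop 0).mono fun θ hθ => ?_)
    (tendsto_atTop_add_const_left _ (v 0) (tendsto_id.const_mul_atTop hc))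
  have := hgrowth θ hθ hθ
  simp only [id, sub_zero] at this ⊢
  linarith

theorem tendsto_atBot_of_hasDerivAt_of_le {v v' : ℝ → ℝ} (hv : ∀ θ, HasDerivAt v (v' θ) θ)
    {c : ℝ} (hc : 0 < c) (hle : ∀ θ ∈ Set.Iic 0, c ≤ v' θ) : Tendsto v atBot atBot := by
  have hdiff : Differentiable ℝ v := fun θ => (hv θ).differentiableAt
  have hgrowth := (convex_Iic (0 : ℝ)).mul_sub_le_image_sub_of_le_deriv
    hdiff.continuous.continuousOn hdiff.differentiableOn
    (fun θ hθ => (hv θ).deriv ▸ hle θ (interior_subset hθ))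
  refine tendsto_atBot_mono' _ ((eventually_le_atBot 0).mono fun θ hθ => ?_)
    (tendsto_atBot_add_const_left _ (v 0) (tendsto_id.const_mul_atBot hc))
  have := hgrowth θ hθ 0 Set.self_mem_Iic hθ
  simp only [id, zero_sub] at this ⊢
  linarith

/- The system `v' = h`, `h' = u h`, `u' = -λ h` is the constant curvature equation
`-h⁻¹ (log h)'' = λ` for `h = v'`, written with `u = (log h)'`. -/
namespace ConstantCurvature

variable {v h u : ℝ → ℝ} {lam : ℝ}

theorem add_mul_eq (hv : ∀ θ, HasDerivAt v (h θ) θ) (hu : ∀ θ, HasDerivAt u (-lam * h θ) θ)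
    (θ : ℝ) : u θ + lam * v θ = u 0 + lam * v 0 := by
  have hd : ∀ t, HasDerivAt (fun t => u t + lam * v t) 0 t := fun t =>
    ((hu t).add ((hv t).const_mul lam)).congr_deriv (by ring)
  exact is_const_of_deriv_eq_zero (fun t => (hd t).differentiableAt) (fun t => (hd t).deriv) θ 0

theorem sq_add_two_mul_eq (hh : ∀ θ, HasDerivAt h (u θ * h θ) θ)
    (hu : ∀ θ, HasDerivAt u (-lam * h θ) θ) (θ : ℝ) :
    u θ ^ 2 + 2 * lam * h θ = u 0 ^ 2 + 2 * lam * h 0 := by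
  have hd : ∀ t, HasDerivAt (fun t => u t ^ 2 + 2 * lam * h t) 0 t := fun t =>
    (((hu t).pow 2).add ((hh t).const_mul (2 * lam))).congr_deriv (by ring)
  exact is_const_of_deriv_eq_zero (fun t => (hd t).differentiableAt) (fun t => (hd t).deriv) θ 0

theorem pos_of_bddAbove_of_bddBelow (hv : ∀ θ, HasDerivAt v (h θ) θ)
    (hh : ∀ θ, HasDerivAt h (u θ * h θ) θ) (hu : ∀ θ, HasDerivAt u (-lam * h θ) θ)
    (hpos : ∀ θ, 0 < h θ) (hbddAbove : BddAbove (Set.range v))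
    (hbddBelow : BddBelow (Set.range v)) : 0 < lam := by
  by_contra! hlam
  have hu_mono : Monotone u :=
    monotone_of_deriv_nonneg (fun θ => (hu θ).differentiableAt) fun θ => by
      rw [(hu θ).deriv]; nlinarith [hpos θ]
  have hh_diff : Differentiable ℝ h := fun θ => (hh θ).differentiableAt
  rcases le_total 0 (u 0) with hu0 | hu0
  · have hmono : MonotoneOn h (Set.Ici 0) :=
      monotoneOn_of_deriv_nonneg (convex_Ici 0) hh_diff.continuous.continuousOn
        hh_diff.differentiableOn fun θ hθ => (hh θ).deriv ▸
          mul_nonneg (hu0.trans (hu_mono (interior_subset hθ))) (hpos θ).le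
    exact not_bddAbove_of_tendsto_atTop (tendsto_atTop_of_hasDerivAt_of_le hv (hpos 0)
      fun θ hθ => hmono Set.self_mem_Ici hθ hθ) hbddAbove
  · have hanti : AntitoneOn h (Set.Iic 0) :=
      antitoneOn_of_deriv_nonpos (convex_Iic 0) hh_diff.continuous.continuousOn
        hh_diff.differentiableOn fun θ hθ => (hh θ).deriv ▸ mul_nonpos_of_nonpos_of_nonneg
          ((hu_mono (Set.mem_Iic.1 (interior_subset hθ))).trans hu0) (hpos θ).le
    exact not_bddBelow_of_tendsto_atBot (tendsto_atBot_of_hasDerivAt_of_le hv (hpos 0)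
      fun θ hθ => hanti hθ Set.self_mem_Iic hθ) hbddBelow

theorem exists_sub_eq_mul_exp_mul_add (hh : ∀ θ, HasDerivAt h (u θ * h θ) θ)
    (hu : ∀ θ, HasDerivAt u (-lam * h θ) θ) (hpos : ∀ θ, 0 < h θ) (hlam : 0 < lam) :
    ∃ g K : ℝ, 0 < g ∧ 0 < K ∧ ∀ θ, g - u θ = K * exp (g * θ) * (g + u θ) := by
  set g := √(u 0 ^ 2 + 2 * lam * h 0)
  have hg : 0 < g := sqrt_pos.2 (by nlinarith [hpos 0, sq_nonneg (u 0)])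
  have henergy : ∀ θ, u θ ^ 2 + 2 * lam * h θ = g ^ 2 := fun θ => by
    rw [sq_add_two_mul_eq hh hu θ, sq_sqrt (by nlinarith [hpos 0, sq_nonneg (u 0)])]
  have hbound : ∀ θ, 0 < g - u θ ∧ 0 < g + u θ := fun θ => by
    have : u θ ^ 2 < g ^ 2 := by nlinarith [henergy θ, hpos θ]
    constructor <;> nlinarith
  set q : ℝ → ℝ := fun θ => (g - u θ) / (g + u θ) * exp (-(g * θ))
  have hq : ∀ θ, HasDerivAt q 0 θ := fun θ => by
    have hu' : HasDerivAt u (-(g ^ 2 - u θ ^ 2) / 2) θ :=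
      (hu θ).congr_deriv (by linarith [henergy θ])
    refine (((hu'.const_sub g).fun_div (hu'.const_add g) (hbound θ).2.ne').mul
      ((hasDerivAt_id θ).const_mul g).neg.exp).congr_deriv ?_
    have := (hbound θ).2.ne'
    field_simp
    ring
  refine ⟨g, q 0, hg, mul_pos (div_pos (hbound 0).1 (hbound 0).2) (exp_pos _), fun θ => ?_⟩
  have hconst : q θ = q 0 :=
    is_const_of_deriv_eq_zero (fun t => (hq t).differentiableAt) (fun t => (hq t).deriv) θ 0
  have := (hbound θ).2.ne'
  rw [← hconst]
  simp only [q, exp_neg]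
  field_simp

end ConstantCurvature

theorem hasDerivAt_eq_deriv_log_mul {h : ℝ → ℝ} (hpos : ∀ θ, 0 < h θ) (hh : Differentiable ℝ h)
    (θ : ℝ) : HasDerivAt h (deriv (fun t => log (h t)) θ * h θ) θ := by
  rw [deriv.log (hh θ) (hpos θ).ne', div_mul_cancel₀ _ (hpos θ).ne']
  exact (hh θ).hasDerivAt

theorem hasDerivAt_deriv_log_of_neg_inv_mul_eq {h : ℝ → ℝ} {lam : ℝ} (hpos : ∀ θ, 0 < h θ)
    (hh : ContDiff ℝ 2 h) (hS : ∀ θ, -(h θ)⁻¹ * deriv (deriv fun t => log (h t)) θ = lam)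
    (θ : ℝ) : HasDerivAt (deriv fun t => log (h t)) (-lam * h θ) θ := by
  have hlog : ContDiff ℝ (1 + 1) fun t => log (h t) := hh.log fun θ => (hpos θ).ne'
  have hdiff : Differentiable ℝ (deriv fun t => log (h t)) :=
    (contDiff_succ_iff_deriv.1 hlog).2.2.differentiable one_ne_zero
  refine (hdiff θ).hasDerivAt.congr_deriv ?_
  have := hS θ
  field_simp [(hpos θ).ne'] at this
  linarith

noncomputable section ExponentialFamily

variable {ι : Type*} [Fintype ι] (C F : ι → ℝ)

def partitionFunction (θ : ℝ) : ℝ := ∑ k, exp (C k + θ * F k)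

def gibbsMean (θ : ℝ) : ℝ := (∑ k, F k * exp (C k + θ * F k)) / partitionFunction C F θ

def gibbsVariance (θ : ℝ) : ℝ :=
  (∑ k, (F k - gibbsMean C F θ) ^ 2 * exp (C k + θ * F k)) / partitionFunction C F θ

def fiberWeight (μ : ℝ) : ℝ := ∑ k with F k = μ, exp (C k)

theorem partitionFunction_pos [Nonempty ι] (θ : ℝ) : 0 < partitionFunction C F θ :=
  sum_pos (fun _ _ => exp_pos _) univ_nonempty

theorem contDiff_partitionFunction {n : WithTop ℕ∞} : ContDiff ℝ n (partitionFunction C F) := by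
  unfold partitionFunction; fun_prop

theorem hasDerivAt_sum_mul_exp_s16 (φ : ι → ℝ) (θ : ℝ) :
    HasDerivAt (fun θ => ∑ k, φ k * exp (C k + θ * F k))
      (∑ k, φ k * F k * exp (C k + θ * F k)) θ :=
  HasDerivAt.fun_sum fun k _ =>
    ((((hasDerivAt_id θ).mul_const (F k)).const_add (C k)).exp.const_mul (φ k)).congr_deriv
      (by simp only [id, one_mul]; ring)

theorem hasDerivAt_partitionFunction (θ : ℝ) :
    HasDerivAt (partitionFunction C F) (∑ k, F k * exp (C k + θ * F k)) θ := by
  have := hasDerivAt_sum_mul_exp_s16 C F (fun _ => 1) θ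
  simp only [one_mul] at this
  exact this

theorem hasDerivAt_log_partitionFunction [Nonempty ι] (θ : ℝ) :
    HasDerivAt (fun θ => log (partitionFunction C F θ)) (gibbsMean C F θ) θ :=
  (hasDerivAt_partitionFunction C F θ).log (partitionFunction_pos C F θ).ne'

theorem hasDerivAt_gibbsMean [Nonempty ι] (θ : ℝ) :
    HasDerivAt (gibbsMean C F) (gibbsVariance C F θ) θ := by
  have hZ := partitionFunction_pos C F θ
  refine ((hasDerivAt_sum_mul_exp_s16 C F F θ).fun_div (hasDerivAt_partitionFunction C F θ)
    hZ.ne').congr_deriv ?_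
  have hexpand : ∑ k, (F k - gibbsMean C F θ) ^ 2 * exp (C k + θ * F k)
      = ∑ k, F k * F k * exp (C k + θ * F k)
        - 2 * gibbsMean C F θ * ∑ k, F k * exp (C k + θ * F k)
        + gibbsMean C F θ ^ 2 * partitionFunction C F θ := by
    rw [partitionFunction, mul_sum, mul_sum, ← sum_sub_distrib, ← sum_add_distrib]
    exact sum_congr rfl fun k _ => by ring
  rw [gibbsVariance, hexpand, gibbsMean]
  generalize ∑ k, F k * F k * exp (C k + θ * F k) = Z₂, ∑ k, F k * exp (C k + θ * F k) = Z₁ at *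
  field_simp
  ring

theorem gibbsVariance_pos [Nonempty ι] (hF : ∃ i j, F i ≠ F j) (θ : ℝ) :
    0 < gibbsVariance C F θ := by
  obtain ⟨i, j, hij⟩ := hF
  obtain ⟨k, hk⟩ : ∃ k, F k - gibbsMean C F θ ≠ 0 := by
    by_contra! h
    exact hij (by linarith [h i, h j])
  exact div_pos (sum_pos' (fun _ _ => by positivity) ⟨k, mem_univ k, by positivity⟩)
    (partitionFunction_pos C F θ)

theorem contDiff_gibbsVariance [Nonempty ι] {n : WithTop ℕ∞} :
    ContDiff ℝ n (gibbsVariance C F) := by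
  have hZ := contDiff_partitionFunction C F (n := n)
  have hne := fun θ => (partitionFunction_pos C F θ).ne'
  have hmean : ContDiff ℝ n (gibbsMean C F) := by
    unfold gibbsMean; exact ContDiff.div (by fun_prop) hZ hne
  unfold gibbsVariance; exact ContDiff.div (by fun_prop) hZ hne

theorem bddAbove_range_gibbsMean [Nonempty ι] : BddAbove (Set.range (gibbsMean C F)) := by
  obtain ⟨kmax, hkmax⟩ := Finite.exists_max F
  refine ⟨F kmax, Set.forall_mem_range.2 fun θ => ?_⟩
  rw [gibbsMean, div_le_iff₀ (partitionFunction_pos C F θ), partitionFunction, mul_sum]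
  exact sum_le_sum fun k _ => mul_le_mul_of_nonneg_right (hkmax k) (exp_pos _).le

theorem bddBelow_range_gibbsMean [Nonempty ι] : BddBelow (Set.range (gibbsMean C F)) := by
  obtain ⟨kmin, hkmin⟩ := Finite.exists_min F
  refine ⟨F kmin, Set.forall_mem_range.2 fun θ => ?_⟩
  rw [gibbsMean, le_div_iff₀ (partitionFunction_pos C F θ), partitionFunction, mul_sum]
  exact sum_le_sum fun k _ => mul_le_mul_of_nonneg_right (hkmin k) (exp_pos _).le

theorem fiberWeight_eq_zero_iff (μ : ℝ) : fiberWeight C F μ = 0 ↔ μ ∉ univ.image F := by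
  rw [fiberWeight, sum_eq_zero_iff_of_nonneg fun _ _ => (exp_pos _).le]
  simp [(exp_pos _).ne']

theorem sum_ite_eq_mul_fiberWeight (φ : ℝ → ℝ) (μ : ℝ) [∀ k, Decidable (F k = μ)] :
    ∑ k, (if F k = μ then exp (C k) * φ (F k) else 0) = φ μ * fiberWeight C F μ := by
  rw [fiberWeight, sum_filter, mul_sum]
  refine sum_congr rfl fun k _ => ?_
  split_ifs with hk
  · rw [hk, mul_comm]
  · rw [mul_zero]

theorem mul_fiberWeight_eq_of_gibbsMean_eq [Nonempty ι] {g c K lam : ℝ}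
    (H : ∀ θ, g - c + lam * gibbsMean C F θ = K * exp (g * θ) * (g + c - lam * gibbsMean C F θ))
    (ν : ℝ) : (g - c + lam * ν) * fiberWeight C F ν
      = K * (g + c - lam * (ν - g)) * fiberWeight C F (ν - g) := by
  set φ : ℝ → ℝ := fun x => g - c + lam * x
  set χ : ℝ → ℝ := fun x => -(K * (g + c - lam * x))
  have hsum : ∀ θ, ∑ i : ι ⊕ ι, Sum.elim (fun k => exp (C k) * φ (F k))
      (fun k => exp (C k) * χ (F k)) i * exp (Sum.elim F (fun k => F k + g) i * θ) = 0 := by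
    intro θ
    set Z₁ := ∑ k, F k * exp (C k + θ * F k)
    have hmean : gibbsMean C F θ * partitionFunction C F θ = Z₁ :=
      div_mul_cancel₀ _ (partitionFunction_pos C F θ).ne'
    have key : (g - c) * partitionFunction C F θ + lam * Z₁
        - K * exp (g * θ) * ((g + c) * partitionFunction C F θ - lam * Z₁) = 0 := by
      linear_combination partitionFunction C F θ * H θ - (lam + lam * K * exp (g * θ)) * hmean
    rw [Fintype.sum_sum_type, ← key]
    simp only [Sum.elim_inl, Sum.elim_inr, partitionFunction, Z₁, mul_sum, ← sum_add_distrib,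
      ← sum_sub_distrib]
    refine sum_congr rfl fun k _ => ?_
    simp only [φ, χ, add_mul, exp_add, mul_comm θ (F k)]
    ring
  have := sum_filter_eq_zero_of_sum_mul_exp_eq_zero hsum ν
  rw [sum_filter, Fintype.sum_sum_type] at this
  -- `simp` cannot reduce `Sum.elim` inside the decidability instances of the `if`s
  change ∑ k, (if F k = ν then exp (C k) * φ (F k) else 0)
    + ∑ k, (if F k + g = ν then exp (C k) * χ (F k) else 0) = 0 at this
  simp only [← eq_sub_iff_add_eq, sum_ite_eq_mul_fiberWeight] at this
  linear_combination this

theorem exists_eq_two_div_of_gibbsMean_eq {g c K lam : ℝ} (hF : ∃ i j, F i ≠ F j) (hg : 0 < g)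
    (hK : K ≠ 0)
    (H : ∀ θ, g - c + lam * gibbsMean C F θ = K * exp (g * θ) * (g + c - lam * gibbsMean C F θ)) :
    ∃ j : ℕ, 0 < j ∧ j < #(univ.image F) ∧ lam = 2 / j := by
  obtain ⟨i₀, j₀, hij⟩ := hF
  have : Nonempty ι := ⟨i₀⟩
  have hW := mul_fiberWeight_eq_of_gibbsMean_eq C F H
  have hW_ne : ∀ k, fiberWeight C F (F k) ≠ 0 := fun k =>
    (fiberWeight_eq_zero_iff C F _).not.2 (not_not.2 (mem_image_of_mem F (mem_univ k)))
  have hW_zero : ∀ μ, (∀ k, F k ≠ μ) → fiberWeight C F μ = 0 := fun μ hμ =>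
    (fiberWeight_eq_zero_iff C F μ).2 (by simpa using hμ)
  obtain ⟨kmax, hkmax⟩ := Finite.exists_max F
  obtain ⟨kmin, hkmin⟩ := Finite.exists_min F
  have htop : g + c - lam * F kmax = 0 := by
    have := hW (F kmax + g)
    rw [hW_zero (F kmax + g) fun k hk => by linarith [hkmax k], add_sub_cancel_right] at this
    simpa [hK, hW_ne] using this.symm
  have hbot : g - c + lam * F kmin = 0 := by
    have := hW (F kmin)
    rw [hW_zero (F kmin - g) fun k hk => by linarith [hkmin k]] at this
    simpa [hW_ne] using this
  have hspread : lam * (F kmax - F kmin) = 2 * g := by linarith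
  have hlam : lam ≠ 0 := by rintro rfl; linarith
  have hstep : ∀ ν ∈ univ.image F, ν ≠ F kmin → ν - g ∈ univ.image F := by
    intro ν hν hne
    by_contra hnot
    obtain ⟨k, -, rfl⟩ := mem_image.1 hν
    have := hW (F k)
    rw [(fiberWeight_eq_zero_iff C F _).2 hnot, mul_zero,
      show g - c + lam * F k = lam * (F k - F kmin) by linarith] at this
    simp [hlam, sub_ne_zero.2 hne, hW_ne] at this
  obtain ⟨j, hj, hjeq⟩ :=
    exists_lt_card_sub_mul_eq_of_forall_sub_mem hg (mem_image_of_mem F (mem_univ kmax)) hstep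
  have hj0 : j ≠ 0 := by
    rintro rfl
    rw [Nat.cast_zero, zero_mul, sub_zero] at hjeq
    exact hij (by linarith [hkmax i₀, hkmin i₀, hkmax j₀, hkmin j₀])
  refine ⟨j, Nat.pos_of_ne_zero hj0, hj, (eq_div_iff (Nat.cast_ne_zero.2 hj0)).2 ?_⟩
  exact mul_right_cancel₀ hg.ne' (by rw [← hspread, ← hjeq]; ring)

end ExponentialFamily

theorem constant_scalar_curvature_classification_general (m : ℕ)
    (F C : Fin (m + 1) → ℝ) (hne : ∃ i j, F i ≠ F j)
    (ψ : ℝ → ℝ) (hψ : ∀ θ, ψ θ = Real.log (∑ k, Real.exp (C k + θ * F k)))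
    (h : ℝ → ℝ) (hh : ∀ θ, h θ = deriv (deriv ψ) θ)
    (lam : ℝ)
    (hS : ∀ θ : ℝ, -(h θ)⁻¹ * deriv (deriv (fun t => Real.log (h t))) θ = lam) :
    ∃ k : ℕ, 1 ≤ k ∧ k ≤ m ∧ lam = 2 / k := by
  have hmean : deriv ψ = gibbsMean C F := funext fun θ => by
    rw [funext hψ]; exact (hasDerivAt_log_partitionFunction C F θ).deriv
  obtain rfl : h = gibbsVariance C F := funext fun θ => by
    rw [hh, hmean, (hasDerivAt_gibbsMean C F θ).deriv]
  set u := deriv fun t => log (gibbsVariance C F t)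
  have hpos := gibbsVariance_pos C F hne
  have hv := hasDerivAt_gibbsMean C F
  have hh := hasDerivAt_eq_deriv_log_mul hpos
    ((contDiff_gibbsVariance C F (n := 1)).differentiable one_ne_zero)
  have hu := hasDerivAt_deriv_log_of_neg_inv_mul_eq hpos (contDiff_gibbsVariance C F) hS
  have hlam := ConstantCurvature.pos_of_bddAbove_of_bddBelow hv hh hu hpos
    (bddAbove_range_gibbsMean C F) (bddBelow_range_gibbsMean C F)
  obtain ⟨g, K, hg, hK, htanh⟩ := ConstantCurvature.exists_sub_eq_mul_exp_mul_add hh hu hpos hlam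
  obtain ⟨j, hj, hjcard, rfl⟩ := exists_eq_two_div_of_gibbsMean_eq C F
    (c := u 0 + lam * gibbsMean C F 0) (lam := lam) hne hg hK.ne' fun θ => by
      linear_combination htanh θ + (1 + K * exp (g * θ)) * ConstantCurvature.add_mul_eq hv hu θ
  have : #(univ.image F) ≤ m + 1 := card_image_le.trans_eq (card_fin _)
  exact ⟨j, hj, by omega, rfl⟩

theorem constant_scalar_curvature_classification (m : ℕ) (hm : 1 ≤ m)
    (F C : Fin (m + 1) → ℝ) (hne : ∃ i j, F i ≠ F j)
    (ψ : ℝ → ℝ) (hψ : ∀ θ, ψ θ = Real.log (∑ k, Real.exp (C k + θ * F k)))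
    (h : ℝ → ℝ) (hh : ∀ θ, h θ = deriv (deriv ψ) θ)
    (lam : ℝ)
    (hS : ∀ θ : ℝ, -(h θ)⁻¹ * deriv (deriv (fun t => Real.log (h t))) θ = lam) :
    ∃ k : ℕ, 1 ≤ k ∧ k ≤ m ∧ lam = 2 / k :=
  constant_scalar_curvature_classification_general m F C hne ψ hψ h hh lam hS
end

section
/- Let Ω = {x_0,...,x_m} be finite, and let (C,F), (C',F') be pairs of functions Ω → ℝ with F, F' each linearly independent from 𝟙. If the families of maps {p_{C,F}(·;θ)}_{θ∈ℝ} and {p_{C',F'}(·;θ')}_{θ'∈ℝ} coincide as sets of functions Ω → ℝ, then there exist a,b,c,d ∈ ℝ with a ≠ 0 such that F = aF' + c𝟙 and C = C' + bF' + d𝟙. -/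
open Real

theorem equivalent_families_are_G_related (m : ℕ)
    (C F C' F' : Fin (m + 1) → ℝ)
    (hF : ¬∃ c : ℝ, ∀ x, F x = c) (hF' : ¬∃ c : ℝ, ∀ x, F' x = c)
    (ψ ψ' : ℝ → ℝ)
    (hψ : ∀ θ, ψ θ = Real.log (∑ k, Real.exp (C k + θ * F k)))
    (hψ' : ∀ θ, ψ' θ = Real.log (∑ k, Real.exp (C' k + θ * F' k)))
    (hcoincide :
      {f : Fin (m + 1) → ℝ | ∃ θ : ℝ, f = fun x => Real.exp (C x + θ * F x - ψ θ)} =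
        {f : Fin (m + 1) → ℝ |
          ∃ θ' : ℝ, f = fun x => Real.exp (C' x + θ' * F' x - ψ' θ')}) :
    ∃ a b c d : ℝ, a ≠ 0 ∧ (∀ x, F x = a * F' x + c) ∧ (∀ x, C x = C' x + b * F' x + d) := by
  have key : ∀ θ : ℝ, ∃ θ' : ℝ, ∀ x, C x + θ * F x - ψ θ = C' x + θ' * F' x - ψ' θ' := by
    intro θ
    have h : (fun x => Real.exp (C x + θ * F x - ψ θ)) ∈
        {f : Fin (m + 1) → ℝ |
          ∃ θ' : ℝ, f = fun x => Real.exp (C' x + θ' * F' x - ψ' θ')} := by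
      rw [← hcoincide]; exact ⟨θ, rfl⟩
    obtain ⟨θ', hθ'⟩ := h
    exact ⟨θ', fun x => Real.exp_injective (congrFun hθ' x)⟩
  obtain ⟨t0, h0⟩ := key 0
  obtain ⟨t1, h1⟩ := key 1
  refine ⟨t1 - t0, t0, ψ 1 - ψ 0 - ψ' t1 + ψ' t0, ψ 0 - ψ' t0, ?_, ?_, ?_⟩
  · intro h
    apply hF
    refine ⟨ψ 1 - ψ 0 - ψ' t1 + ψ' t0, fun x => ?_⟩
    have e0 := h0 x; have e1 := h1 x
    have ht : t1 = t0 := by linarith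
    subst ht; nlinarith
  · intro x
    have e0 := h0 x; have e1 := h1 x
    nlinarith
  · intro x
    have := h0 x; linarith
end
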